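/- arXiv:1802.05127 — 3 statements merged into one kernel-verified Lean document; each statement's English description precedes it below -/
import Mathlib

section
/- Expected local degree distribution in the SPA model: Let B be a ball in S of volume b = b(n) and t = t(n) ∈ ℕ with bt → ∞ as n → ∞. Then for each fixed i ≥ 0, the expected number of vertices in B of in-degree i at time t satisfies E(N_{i,t}) = (1+o(1))·c_i·bt, where c_0 = 1/(1+pA2) and c_i = c_{i−1}·p·(A1(i−1)+A2)/(1+p(A1·i+A2)) for i ≥ 1. -/
/-!
A vertex `s ≤ t` of in-degree `j` receives an edge from the vertex born at step `t + 1` with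
probability `q_j(t) = p · min ((A1 j + A2) / t, 1)`, whatever the past: the new position is a
fresh uniform point of the torus (so it falls in any ball of volume `v` with probability `v`)
and the coin is a fresh uniform point of `[0,1]`. Summing over the vertices in a ball `B`, the
expectations `E N_{j,t}(B)` are `|B|` times the solution `g_j(t)` of a linear recursion that does
not depend on `B`. Once `t ≥ A1 j + A2`, the deviation `d_j(t) = g_j(t) - c_j t` satisfies
`d_j(t+1) = (1 - p (A1 j + A2) / t) d_j(t) + p (A1 (j-1) + A2) d_{j-1}(t) / t`, the constants
`c_j` being exactly those that cancel the remaining constant terms; such a recursion keeps `d_j`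
bounded. Hence `E N_{j,t}(B) = |B| (c_j t + O(1))`, and `|B| t → ∞` forces `t → ∞`.
-/

open MeasureTheory ProbabilityTheory Filter

noncomputable section

abbrev SPATorus (m : ℕ) := Fin m → AddCircle (1 : ℝ)

def torusRad (m : ℕ) (vol : ℝ) : ℝ := vol ^ ((1 : ℝ) / m) / 2

open Classical in
def spaInDeg (p A1 A2 : ℝ) (m : ℕ) (x : ℕ → SPATorus m) (u : ℕ → ℕ → ℝ) (s : ℕ) : ℕ → ℕ
  | 0 => 0
  | t + 1 =>
    spaInDeg p A1 A2 m x u s t +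
      (if 1 ≤ s ∧ s ≤ t ∧
          dist (x (t + 1)) (x s) ≤
            torusRad m (min ((A1 * (spaInDeg p A1 A2 m x u s t : ℝ) + A2) / (t : ℝ)) 1) ∧
          u (t + 1) s ≤ p
        then 1 else 0)

def spaEdge (p A1 A2 : ℝ) (m : ℕ) (x : ℕ → SPATorus m) (u : ℕ → ℕ → ℝ) (a b : ℕ) : Prop :=
  1 ≤ b ∧ b < a ∧ spaInDeg p A1 A2 m x u b a = spaInDeg p A1 A2 m x u b (a - 1) + 1

open Classical in
/-- The set of in-neighbours of `v` at time `t`. -/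
def spaInNbrs (p A1 A2 : ℝ) (m : ℕ) (x : ℕ → SPATorus m) (u : ℕ → ℕ → ℝ) (v t : ℕ) :
    Finset ℕ :=
  (Finset.range (t + 1)).filter fun a => spaEdge p A1 A2 m x u a v

open Classical in
/-- Directed edges of the SPA graph going from the set `B` to the set `C`. -/
def spaEdgesBetween (p A1 A2 : ℝ) (m : ℕ) (x : ℕ → SPATorus m) (u : ℕ → ℕ → ℝ)
    (B C : Finset ℕ) : Finset (ℕ × ℕ) :=
  (B ×ˢ C).filter fun q => spaEdge p A1 A2 m x u q.1 q.2

/-- The directed local clustering coefficient `c⁻(v,n)`. -/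
def spaCMinus (p A1 A2 : ℝ) (m : ℕ) (x : ℕ → SPATorus m) (u : ℕ → ℕ → ℝ) (v n : ℕ) : ℝ :=
  ((spaEdgesBetween p A1 A2 m x u (spaInNbrs p A1 A2 m x u v n)
      (spaInNbrs p A1 A2 m x u v n)).card : ℝ) /
    ((spaInDeg p A1 A2 m x u v n : ℝ) * ((spaInDeg p A1 A2 m x u v n : ℝ) - 1) / 2)

open Classical in
/-- `T̂_v`: the smallest time `t` at which the in-degree of `v` exceeds the threshold `w`
(and `n` if the in-degree never exceeds `w` by time `n`). -/
def spaThat (p A1 A2 : ℝ) (m : ℕ) (x : ℕ → SPATorus m) (u : ℕ → ℕ → ℝ) (w : ℝ) (v n : ℕ) : ℕ :=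
  if h : ∃ t, w < (spaInDeg p A1 A2 m x u v t : ℝ) ∧ t ≤ n then Nat.find h else n

/-- The set `E_old` of edges between in-neighbours of `v` with head an old neighbour. -/
def spaEold (p A1 A2 : ℝ) (m : ℕ) (x : ℕ → SPATorus m) (u : ℕ → ℕ → ℝ) (w : ℝ) (v n : ℕ) :
    Finset (ℕ × ℕ) :=
  spaEdgesBetween p A1 A2 m x u (spaInNbrs p A1 A2 m x u v n)
    (spaInNbrs p A1 A2 m x u v (spaThat p A1 A2 m x u w v n))

/-- `c_old(v,n)`. -/
def spaCold (p A1 A2 : ℝ) (m : ℕ) (x : ℕ → SPATorus m) (u : ℕ → ℕ → ℝ) (w : ℝ) (v n : ℕ) : ℝ :=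
  ((spaEold p A1 A2 m x u w v n).card : ℝ) /
    ((spaInDeg p A1 A2 m x u v n : ℝ) * ((spaInDeg p A1 A2 m x u v n : ℝ) - 1) / 2)

/-- `c_new(v,n)`. -/
def spaCnew (p A1 A2 : ℝ) (m : ℕ) (x : ℕ → SPATorus m) (u : ℕ → ℕ → ℝ) (w : ℝ) (v n : ℕ) : ℝ :=
  (((spaEdgesBetween p A1 A2 m x u (spaInNbrs p A1 A2 m x u v n) (spaInNbrs p A1 A2 m x u v n)
      \ spaEold p A1 A2 m x u w v n).card : ℕ) : ℝ) /
    ((spaInDeg p A1 A2 m x u v n : ℝ) * ((spaInDeg p A1 A2 m x u v n : ℝ) - 1) / 2)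

open Classical in
/-- The out-degree of vertex `i` (all out-edges are created at its birth time `i`). -/
def spaOutDeg (p A1 A2 : ℝ) (m : ℕ) (x : ℕ → SPATorus m) (u : ℕ → ℕ → ℝ) (i : ℕ) : ℕ :=
  ((Finset.range i).filter fun b => spaEdge p A1 A2 m x u i b).card

open Classical in
/-- `N_{i,t}(B)`: the number of vertices in the closed ball of radius `r` about `z`
having in-degree exactly `i` at time `t`. -/
def spaNBall (p A1 A2 : ℝ) (m : ℕ) (x : ℕ → SPATorus m) (u : ℕ → ℕ → ℝ)
    (z : SPATorus m) (r : ℝ) (i t : ℕ) : ℕ :=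
  ((Finset.Icc 1 t).filter fun s =>
    x s ∈ Metric.closedBall z r ∧ spaInDeg p A1 A2 m x u s t = i).card

/-- The constants `c_i` of the SPA degree distribution. -/
def spaC (p A1 A2 : ℝ) : ℕ → ℝ
  | 0 => 1 / (1 + p * A2)
  | i + 1 => spaC p A1 A2 i * p * (A1 * i + A2) / (1 + p * (A1 * (i + 1) + A2))

/-- The index type for the driving randomness: positions and coins. -/
def SPAIndex : Type := ℕ ⊕ ℕ × ℕ

/-- Codomain family : positions live in the torus and coins in `ℝ`. -/
def spaMix (m : ℕ) : SPAIndex → Type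
  | Sum.inl _ => SPATorus m
  | Sum.inr _ => ℝ

instance (m : ℕ) (i : SPAIndex) : MeasurableSpace (spaMix m i) :=
  match i with
  | Sum.inl _ => inferInstanceAs (MeasurableSpace (SPATorus m))
  | Sum.inr _ => inferInstanceAs (MeasurableSpace ℝ)

/-- The family of all driving random variables. -/
def spaFam (m : ℕ) {Ω : Type} (X : ℕ → Ω → SPATorus m) (U : ℕ → ℕ → Ω → ℝ) :
    ∀ i : SPAIndex, Ω → spaMix m i
  | Sum.inl a => X a
  | Sum.inr ab => U ab.1 ab.2

/-- `X, U` drive an SPA process: the positions `X n` are independent uniform points of the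
torus, and the coins `U a b` are independent uniform points of `[0,1]`, all jointly
independent. -/
structure IsSPASource (m : ℕ) {Ω : Type} [MeasureSpace Ω]
    (X : ℕ → Ω → SPATorus m) (U : ℕ → ℕ → Ω → ℝ) : Prop where
  measurable_X : ∀ a, Measurable (X a)
  measurable_U : ∀ a b, Measurable (U a b)
  law_X : ∀ a, Measure.map (X a) ℙ = (volume : Measure (SPATorus m))
  law_U : ∀ a b, Measure.map (U a b) ℙ = (volume : Measure ℝ).restrict (Set.Icc 0 1)
  indep : iIndepFun (spaFam m X U) ℙ

/-- Real-valued in-degree of vertex `s` at time `t`, as a function of the sample point. -/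
def spaDegR (p A1 A2 : ℝ) (m : ℕ) {Ω : Type} (X : ℕ → Ω → SPATorus m)
    (U : ℕ → ℕ → Ω → ℝ) (ωp : Ω) (s t : ℕ) : ℝ :=
  (spaInDeg p A1 A2 m (fun a => X a ωp) (fun a b => U a b ωp) s t : ℝ)

open Metric
open scoped ENNReal Topology

section InDegree

variable {p A1 A2 : ℝ} {m : ℕ}

lemma spaInDeg_eq_zero_of_le {x : ℕ → SPATorus m} {u : ℕ → ℕ → ℝ} {s t : ℕ} (h : t ≤ s) :
    spaInDeg p A1 A2 m x u s t = 0 := by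
  induction t with
  | zero => rfl
  | succ t ih => rw [spaInDeg, ih (by omega), if_neg (by omega)]

lemma measurable_torusRad (m : ℕ) : Measurable (torusRad m) :=
  (measurable_id.pow_const _).div_const _

lemma measurable_spaInDeg {E : Type*} {mE : MeasurableSpace E} {x : ℕ → E → SPATorus m}
    {u : ℕ → ℕ → E → ℝ} (s t : ℕ) (hx : ∀ a ≤ t, Measurable (x a))
    (hu : ∀ a ≤ t, ∀ b ≤ t, Measurable (u a b)) :
    Measurable fun e => spaInDeg p A1 A2 m (fun a => x a e) (fun a b => u a b e) s t := by
  induction t with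
  | zero => exact measurable_const
  | succ t ih =>
    have hdeg := ih (fun a ha => hx a (by omega)) (fun a ha b hb => hu a (by omega) b (by omega))
    refine hdeg.add (Measurable.ite ?_ measurable_const measurable_const)
    by_cases hs : 1 ≤ s ∧ s ≤ t
    · simp only [hs, true_and, Set.ofPred_and]
      refine (measurableSet_le ((hx _ le_rfl).dist (hx s (by omega))) ?_).inter
        (measurableSet_le (hu _ le_rfl s (by omega)) measurable_const)
      exact (measurable_torusRad m).comp
        (((measurable_from_nat.comp hdeg).const_mul _ |>.add_const _ |>.div_const _).min
          measurable_const)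
    · convert MeasurableSet.empty
      ext e
      simp only [Set.mem_ofPred_eq, Set.mem_empty_iff_false, iff_false]
      tauto

end InDegree

lemma volume_closedBall_torusRad {m : ℕ} (hm : 1 ≤ m) (y : SPATorus m) {v : ℝ}
    (h0 : 0 ≤ v) (h1 : v ≤ 1) :
    volume (closedBall y (torusRad m v)) = ENNReal.ofReal v := by
  have hm' : (m : ℝ) ≠ 0 := Nat.cast_ne_zero.mpr (by omega)
  have hw0 : 0 ≤ v ^ ((1 : ℝ) / m) := Real.rpow_nonneg h0 _
  have hw1 : v ^ ((1 : ℝ) / m) ≤ 1 := Real.rpow_le_one h0 h1 (by positivity)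
  have hr : 0 ≤ torusRad m v := by unfold torusRad; positivity
  have hside (i : Fin m) :
      volume (closedBall (y i) (torusRad m v)) = ENNReal.ofReal (v ^ ((1 : ℝ) / m)) := by
    rw [AddCircle.volume_closedBall, torusRad, mul_div_cancel₀ _ two_ne_zero, min_eq_right hw1]
  rw [closedBall_pi y hr, volume_pi_pi, Finset.prod_congr rfl fun i _ => hside i,
    Finset.prod_const, Finset.card_univ, Fintype.card_fin, ← ENNReal.ofReal_pow hw0,
    ← Real.rpow_natCast, ← Real.rpow_mul h0, one_div_mul_cancel hm', Real.rpow_one]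

theorem measure_inter_dist_le_eq_mul {Ω E : Type*} {𝓕 mΩ : MeasurableSpace Ω} {μ : Measure Ω}
    [IsFiniteMeasure μ] [PseudoMetricSpace E] [MeasurableSpace E] [BorelSpace E]
    [SecondCountableTopology E] (h𝓕 : 𝓕 ≤ mΩ) {A : Set Ω}
    (hA : MeasurableSet[𝓕] A) {Y Z : Ω → E} (hY : Measurable[𝓕] Y) (hZ : Measurable Z)
    (hind : Indep 𝓕 (MeasurableSpace.comap Z inferInstance) μ) {r : ℝ} {V : ℝ≥0∞}
    (hV : ∀ y, μ.map Z (closedBall y r) = V) :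
    μ (A ∩ {ω | dist (Z ω) (Y ω) ≤ r}) = μ A * V := by
  -- Fubini for the product law of `(W, Z)`: the slice of the event over `W = (True, y)` is a ball.
  set W : Ω → Prop × E := fun ω => (ω ∈ A, Y ω)
  have hW𝓕 : Measurable[𝓕] W := (@measurable_mem _ _ 𝓕).mpr hA |>.prodMk hY
  have hW : Measurable W := hW𝓕.mono h𝓕 le_rfl
  have hWZ : IndepFun W Z μ :=
    (IndepFun_iff_Indep W Z μ).mpr (indep_of_indep_of_le_left hind hW𝓕.comap_le)
  set S : Set ((Prop × E) × E) := {q | q.1.1 ∧ dist q.2 q.1.2 ≤ r}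
  have hS : MeasurableSet S :=
    measurableSet_setOfPred.mpr (measurable_fst.fst.and
      (measurableSet_setOfPred.mp (measurableSet_le (measurable_snd.dist measurable_fst.snd)
        measurable_const)))
  have hslice (w : Prop × E) :
      μ.map Z (Prod.mk w ⁻¹' S) = {w : Prop × E | w.1}.indicator (fun _ => V) w := by
    by_cases hw : w.1
    · have hball : Prod.mk w ⁻¹' S = closedBall w.2 r := by ext; simp [S, hw]
      rw [hball, hV, Set.indicator_of_mem (show w ∈ {w : Prop × E | w.1} from hw)]
    · simp [S, hw]
  calc μ (A ∩ {ω | dist (Z ω) (Y ω) ≤ r}) = μ.map (fun ω => (W ω, Z ω)) S := by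
        rw [Measure.map_apply (hW.prodMk hZ) hS]; rfl
    _ = ∫⁻ w, μ.map Z (Prod.mk w ⁻¹' S) ∂μ.map W := by
        rw [(indepFun_iff_map_prod_eq_prod_map_map hW.aemeasurable hZ.aemeasurable).mp hWZ,
          Measure.prod_apply hS]
    _ = μ A * V := by
        simp_rw [hslice]
        rw [lintegral_indicator_const (measurableSet_setOfPred.mpr measurable_fst),
          Measure.map_apply hW (measurableSet_setOfPred.mpr measurable_fst), mul_comm]
        rfl

section SigmaAlgebras

variable {m : ℕ} {Ω : Type} {X : ℕ → Ω → SPATorus m} {U : ℕ → ℕ → Ω → ℝ}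

abbrev spaGen (m : ℕ) (X : ℕ → Ω → SPATorus m) (U : ℕ → ℕ → Ω → ℝ) (S : Set SPAIndex) :
    MeasurableSpace Ω :=
  ⨆ i ∈ S, MeasurableSpace.comap (spaFam m X U i) inferInstance

def spaPast (t : ℕ) : Set SPAIndex :=
  {i | Sum.elim (· ≤ t) (fun ab => ab.1 ≤ t ∧ ab.2 ≤ t) i}

lemma spaGen_mono {S T : Set SPAIndex} (h : S ⊆ T) : spaGen m X U S ≤ spaGen m X U T :=
  biSup_mono fun _ hi => h hi

lemma measurable_X_spaGen {S : Set SPAIndex} {a : ℕ} (ha : Sum.inl a ∈ S) :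
    Measurable[spaGen m X U S] (X a) :=
  Measurable.of_comap_le (le_iSup₂_of_le (f := fun i _ =>
    MeasurableSpace.comap (spaFam m X U i) inferInstance) (Sum.inl a) ha le_rfl)

lemma measurable_U_spaGen {S : Set SPAIndex} {a b : ℕ} (hab : Sum.inr (a, b) ∈ S) :
    Measurable[spaGen m X U S] (U a b) :=
  Measurable.of_comap_le (le_iSup₂_of_le (f := fun i _ =>
    MeasurableSpace.comap (spaFam m X U i) inferInstance) (Sum.inr (a, b)) hab le_rfl)

namespace IsSPASource

variable [MeasureSpace Ω]

lemma measurable_spaFam (hXU : IsSPASource m X U) : ∀ i, Measurable (spaFam m X U i)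
  | Sum.inl a => hXU.measurable_X a
  | Sum.inr ab => hXU.measurable_U ab.1 ab.2

lemma spaGen_le (hXU : IsSPASource m X U) (S : Set SPAIndex) :
    spaGen m X U S ≤ (inferInstance : MeasurableSpace Ω) :=
  iSup₂_le fun i _ => (hXU.measurable_spaFam i).comap_le

lemma indep_spaGen (hXU : IsSPASource m X U) {S T : Set SPAIndex} (h : Disjoint S T) :
    Indep (spaGen m X U S) (spaGen m X U T) ℙ :=
  indep_iSup_of_disjoint (fun i => (hXU.measurable_spaFam i).comap_le)
    ((iIndepFun_iff_iIndep _ _ _).mp hXU.indep) h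

lemma measure_inter_link_eq_mul [IsProbabilityMeasure (ℙ : Measure Ω)] (hm : 1 ≤ m)
    (hXU : IsSPASource m X U) {s t : ℕ} (hs : s ≤ t) {A : Set Ω}
    (hA : MeasurableSet[spaGen m X U (spaPast t)] A) {v q : ℝ} (hv0 : 0 ≤ v) (hv1 : v ≤ 1)
    (hq : q ≤ 1) :
    ℙ (A ∩ {ω | dist (X (t + 1) ω) (X s ω) ≤ torusRad m v ∧ U (t + 1) s ω ≤ q}) =
      ℙ A * ENNReal.ofReal v * ENNReal.ofReal q := by
  set S := insert (Sum.inl (t + 1)) (spaPast t)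
  have hS : Disjoint S {Sum.inr (t + 1, s)} := by
    refine Set.disjoint_singleton_right.mpr fun h => ?_
    rcases Set.mem_insert_iff.mp h with h | h
    · exact Sum.inr_ne_inl h
    · exact absurd h.1 (by omega)
  have hpast : Disjoint (spaPast t) {Sum.inl (t + 1)} :=
    Set.disjoint_singleton_right.mpr fun h => absurd (show t + 1 ≤ t from h) (by omega)
  have hnear : MeasurableSet[spaGen m X U S]
      (A ∩ {ω | dist (X (t + 1) ω) (X s ω) ≤ torusRad m v}) :=
    (spaGen_mono (Set.subset_insert _ _) _ hA).inter (measurableSet_le (measurable_dist.comp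
      ((measurable_X_spaGen (Set.mem_insert _ _)).prodMk
        (measurable_X_spaGen (Set.mem_insert_of_mem _ hs)))) measurable_const)
  have hcoin : MeasurableSet[spaGen m X U {Sum.inr (t + 1, s)}] {ω | U (t + 1) s ω ≤ q} :=
    measurableSet_le (measurable_U_spaGen rfl) measurable_const
  have hind :
      Indep (spaGen m X U (spaPast t)) (MeasurableSpace.comap (X (t + 1)) inferInstance) ℙ :=
    indep_of_indep_of_le_right (hXU.indep_spaGen hpast)
      (measurable_X_spaGen (S := {Sum.inl (t + 1)}) rfl).comap_le
  have hlawX (y : SPATorus m) :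
      (ℙ : Measure Ω).map (X (t + 1)) (closedBall y (torusRad m v)) = ENNReal.ofReal v := by
    rw [hXU.law_X, volume_closedBall_torusRad hm y hv0 hv1]
  have hlawU : ℙ {ω | U (t + 1) s ω ≤ q} = ENNReal.ofReal q := by
    have hIic : Set.Iic q ∩ Set.Icc 0 1 = Set.Icc 0 q := by
      ext y
      simp only [Set.mem_inter_iff, Set.mem_Iic, Set.mem_Icc]
      exact ⟨fun ⟨h, h0, _⟩ => ⟨h0, h⟩, fun ⟨h0, h⟩ => ⟨h, h0, h.trans hq⟩⟩
    rw [show {ω | U (t + 1) s ω ≤ q} = U (t + 1) s ⁻¹' Set.Iic q from rfl,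
      ← Measure.map_apply (hXU.measurable_U _ _) measurableSet_Iic, hXU.law_U,
      Measure.restrict_apply measurableSet_Iic, hIic, Real.volume_Icc, sub_zero]
  rw [Set.ofPred_and, ← Set.inter_assoc,
    (Indep_iff _ _ _).mp (hXU.indep_spaGen hS) _ _ hnear hcoin, hlawU,
    measure_inter_dist_le_eq_mul (hXU.spaGen_le _) hA (measurable_X_spaGen hs)
      (hXU.measurable_X _) hind hlawX]

end IsSPASource

end SigmaAlgebras

/-- The probability that the vertex born at step `t + 1` links to a given vertex of in-degree `j`:
the volume of the sphere of influence times `p`. -/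
def spaGainProb (p A1 A2 : ℝ) (j t : ℕ) : ℝ := p * min ((A1 * j + A2) / t) 1

section DegreeEvents

variable {m : ℕ} {p A1 A2 : ℝ} {Ω : Type} {X : ℕ → Ω → SPATorus m} {U : ℕ → ℕ → Ω → ℝ}
  {B : Set (SPATorus m)}

def spaDegEvent (p A1 A2 : ℝ) (m : ℕ) (X : ℕ → Ω → SPATorus m) (U : ℕ → ℕ → Ω → ℝ)
    (B : Set (SPATorus m)) (s j t : ℕ) : Set Ω :=
  {ω | X s ω ∈ B ∧ spaInDeg p A1 A2 m (fun a => X a ω) (fun a b => U a b ω) s t = j}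

def spaLinkEvent (p A1 A2 : ℝ) (m : ℕ) (X : ℕ → Ω → SPATorus m) (U : ℕ → ℕ → Ω → ℝ)
    (s j t : ℕ) : Set Ω :=
  {ω | dist (X (t + 1) ω) (X s ω) ≤ torusRad m (min ((A1 * j + A2) / t) 1) ∧ U (t + 1) s ω ≤ p}

open Classical in
lemma spaInDeg_succ_of_le {s t : ℕ} (hs : 1 ≤ s) (hst : s ≤ t) (ω : Ω) :
    spaInDeg p A1 A2 m (fun a => X a ω) (fun a b => U a b ω) s (t + 1) =
      spaInDeg p A1 A2 m (fun a => X a ω) (fun a b => U a b ω) s t +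
        if ω ∈ spaLinkEvent p A1 A2 m X U s
          (spaInDeg p A1 A2 m (fun a => X a ω) (fun a b => U a b ω) s t) t then 1 else 0 := by
  rw [spaInDeg]
  simp only [hs, hst, true_and]
  exact congrArg _ (if_congr Iff.rfl rfl rfl)

lemma spaDegEvent_zero_succ {s t : ℕ} (hs : 1 ≤ s) (hst : s ≤ t) :
    spaDegEvent p A1 A2 m X U B s 0 (t + 1) =
      spaDegEvent p A1 A2 m X U B s 0 t \ spaLinkEvent p A1 A2 m X U s 0 t := by
  ext ω
  simp only [spaDegEvent, Set.mem_sdiff, Set.mem_ofPred_eq, spaInDeg_succ_of_le hs hst ω]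
  split_ifs with h <;> constructor <;> rintro ⟨h1, h2⟩ <;> simp_all

lemma spaDegEvent_succ_succ {s j t : ℕ} (hs : 1 ≤ s) (hst : s ≤ t) :
    spaDegEvent p A1 A2 m X U B s (j + 1) (t + 1) =
      spaDegEvent p A1 A2 m X U B s (j + 1) t \ spaLinkEvent p A1 A2 m X U s (j + 1) t ∪
        spaDegEvent p A1 A2 m X U B s j t ∩ spaLinkEvent p A1 A2 m X U s j t := by
  ext ω
  simp only [spaDegEvent, Set.mem_sdiff, Set.mem_union, Set.mem_inter_iff, Set.mem_ofPred_eq,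
    spaInDeg_succ_of_le hs hst ω]
  generalize spaInDeg p A1 A2 m (fun a => X a ω) (fun a b => U a b ω) s t = d
  split_ifs with h
  · constructor
    · rintro ⟨hB, hd⟩
      exact Or.inr ⟨⟨hB, by omega⟩, by rwa [show j = d by omega]⟩
    · rintro (⟨⟨hB, rfl⟩, hn⟩ | ⟨⟨hB, rfl⟩, -⟩)
      · exact absurd h hn
      · exact ⟨hB, rfl⟩
  · constructor
    · rintro ⟨hB, rfl⟩
      exact Or.inl ⟨⟨hB, rfl⟩, h⟩
    · rintro (⟨⟨hB, rfl⟩, -⟩ | ⟨⟨hB, rfl⟩, hl⟩)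
      · exact ⟨hB, rfl⟩
      · exact absurd hl h


lemma measurableSet_spaGen_spaDegEvent (hB : MeasurableSet B) {s j t : ℕ} (hst : s ≤ t) :
    MeasurableSet[spaGen m X U (spaPast t)] (spaDegEvent p A1 A2 m X U B s j t) :=
  (measurable_X_spaGen hst hB).inter (measurable_spaInDeg s t (fun _ ha => measurable_X_spaGen ha)
    (fun _ ha _ hb => measurable_U_spaGen (S := spaPast t) ⟨ha, hb⟩) (measurableSet_singleton j))

lemma spaDegEvent_self_zero (s : ℕ) :
    spaDegEvent p A1 A2 m X U B s 0 s = X s ⁻¹' B := by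
  ext ω
  simp [spaDegEvent, spaInDeg_eq_zero_of_le le_rfl]

lemma spaDegEvent_self_succ (s j : ℕ) :
    spaDegEvent p A1 A2 m X U B s (j + 1) s = ∅ := by
  ext ω
  simp [spaDegEvent, spaInDeg_eq_zero_of_le le_rfl]

lemma disjoint_spaDegEvent {s j k t : ℕ} (h : j ≠ k) :
    Disjoint (spaDegEvent p A1 A2 m X U B s j t) (spaDegEvent p A1 A2 m X U B s k t) :=
  Set.disjoint_left.mpr fun _ hj hk => h (hj.2.symm.trans hk.2)

end DegreeEvents

/-- `E N_{j,t}(B) / |B|`: the recursion is that of the conditional expectations of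
`N_{j,t+1} - N_{j,t}`, the `1` being the vertex born at step `t + 1`. -/
def spaMeanCount (p A1 A2 : ℝ) : ℕ → ℕ → ℝ
  | _, 0 => 0
  | 0, t + 1 => spaMeanCount p A1 A2 0 t * (1 - spaGainProb p A1 A2 0 t) + 1
  | j + 1, t + 1 =>
    spaMeanCount p A1 A2 (j + 1) t * (1 - spaGainProb p A1 A2 (j + 1) t) +
      spaMeanCount p A1 A2 j t * spaGainProb p A1 A2 j t

namespace IsSPASource

variable {m : ℕ} {p A1 A2 : ℝ} {Ω : Type} [MeasureSpace Ω]
  {X : ℕ → Ω → SPATorus m} {U : ℕ → ℕ → Ω → ℝ} {B : Set (SPATorus m)}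

lemma measurableSet_spaLinkEvent (hXU : IsSPASource m X U) (s j t : ℕ) :
    MeasurableSet (spaLinkEvent p A1 A2 m X U s j t) :=
  (measurableSet_le ((hXU.measurable_X _).dist (hXU.measurable_X _)) measurable_const).inter
    (measurableSet_le (hXU.measurable_U _ _) measurable_const)

lemma measurableSet_spaDegEvent (hXU : IsSPASource m X U) (hB : MeasurableSet B) {s j t : ℕ}
    (hst : s ≤ t) : MeasurableSet (spaDegEvent p A1 A2 m X U B s j t) :=
  hXU.spaGen_le _ _ (measurableSet_spaGen_spaDegEvent hB hst)

lemma measureReal_preimage_X (hXU : IsSPASource m X U) (hB : MeasurableSet B) (s : ℕ) :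
    (ℙ : Measure Ω).real (X s ⁻¹' B) = volume.real B := by
  rw [← map_measureReal_apply (hXU.measurable_X s) hB, hXU.law_X]

variable [IsProbabilityMeasure (ℙ : Measure Ω)]

lemma measureReal_spaDegEvent_inter_link (hm : 1 ≤ m) (hp0 : 0 ≤ p) (hp1 : p ≤ 1)
    (hA1 : 0 ≤ A1) (hA2 : 0 ≤ A2) (hXU : IsSPASource m X U) (hB : MeasurableSet B)
    {s j t : ℕ} (hst : s ≤ t) :
    (ℙ : Measure Ω).real (spaDegEvent p A1 A2 m X U B s j t ∩ spaLinkEvent p A1 A2 m X U s j t) =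
      (ℙ : Measure Ω).real (spaDegEvent p A1 A2 m X U B s j t) * spaGainProb p A1 A2 j t := by
  have hv0 : 0 ≤ min ((A1 * j + A2) / t) 1 := le_min (by positivity) zero_le_one
  rw [measureReal_def, spaLinkEvent, hXU.measure_inter_link_eq_mul hm hst
    (measurableSet_spaGen_spaDegEvent hB hst) hv0 (min_le_right _ _) hp1, ENNReal.toReal_mul,
    ENNReal.toReal_mul, ENNReal.toReal_ofReal hv0, ENNReal.toReal_ofReal hp0, spaGainProb,
    measureReal_def]
  ring

lemma measureReal_spaDegEvent_zero_succ (hm : 1 ≤ m) (hp0 : 0 ≤ p) (hp1 : p ≤ 1)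
    (hA1 : 0 ≤ A1) (hA2 : 0 ≤ A2) (hXU : IsSPASource m X U) (hB : MeasurableSet B)
    {s t : ℕ} (hs : 1 ≤ s) (hst : s ≤ t) :
    (ℙ : Measure Ω).real (spaDegEvent p A1 A2 m X U B s 0 (t + 1)) =
      (ℙ : Measure Ω).real (spaDegEvent p A1 A2 m X U B s 0 t) * (1 - spaGainProb p A1 A2 0 t) := by
  rw [spaDegEvent_zero_succ hs hst, ← Set.sdiff_self_inter,
    measureReal_sdiff Set.inter_subset_left
      ((hXU.measurableSet_spaDegEvent hB hst).inter (hXU.measurableSet_spaLinkEvent s 0 t)),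
    measureReal_spaDegEvent_inter_link hm hp0 hp1 hA1 hA2 hXU hB hst]
  ring

lemma measureReal_spaDegEvent_succ_succ (hm : 1 ≤ m) (hp0 : 0 ≤ p) (hp1 : p ≤ 1)
    (hA1 : 0 ≤ A1) (hA2 : 0 ≤ A2) (hXU : IsSPASource m X U) (hB : MeasurableSet B)
    {s j t : ℕ} (hs : 1 ≤ s) (hst : s ≤ t) :
    (ℙ : Measure Ω).real (spaDegEvent p A1 A2 m X U B s (j + 1) (t + 1)) =
      (ℙ : Measure Ω).real (spaDegEvent p A1 A2 m X U B s (j + 1) t) *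
          (1 - spaGainProb p A1 A2 (j + 1) t) +
        (ℙ : Measure Ω).real (spaDegEvent p A1 A2 m X U B s j t) * spaGainProb p A1 A2 j t := by
  rw [spaDegEvent_succ_succ hs hst, measureReal_union
      ((disjoint_spaDegEvent (Nat.succ_ne_self j)).mono Set.sdiff_subset Set.inter_subset_left)
      ((hXU.measurableSet_spaDegEvent hB hst).inter (hXU.measurableSet_spaLinkEvent s j t)),
    ← Set.sdiff_self_inter, measureReal_sdiff Set.inter_subset_left
      ((hXU.measurableSet_spaDegEvent hB hst).inter (hXU.measurableSet_spaLinkEvent s (j + 1) t)),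
    measureReal_spaDegEvent_inter_link hm hp0 hp1 hA1 hA2 hXU hB hst,
    measureReal_spaDegEvent_inter_link hm hp0 hp1 hA1 hA2 hXU hB hst]
  ring

lemma sum_measureReal_spaDegEvent (hm : 1 ≤ m) (hp0 : 0 ≤ p) (hp1 : p ≤ 1)
    (hA1 : 0 ≤ A1) (hA2 : 0 ≤ A2) (hXU : IsSPASource m X U) (hB : MeasurableSet B) (t j : ℕ) :
    ∑ s ∈ Finset.Icc 1 t, (ℙ : Measure Ω).real (spaDegEvent p A1 A2 m X U B s j t) =
      volume.real B * spaMeanCount p A1 A2 j t := by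
  induction t generalizing j with
  | zero => simp [spaMeanCount]
  | succ t ih =>
    rw [Finset.sum_Icc_succ_top (by omega)]
    cases j with
    | zero =>
      rw [spaDegEvent_self_zero, hXU.measureReal_preimage_X hB, spaMeanCount, mul_add, mul_one,
        ← mul_assoc, ← ih, Finset.sum_mul]
      congr 1
      refine Finset.sum_congr rfl fun s hs => ?_
      rw [Finset.mem_Icc] at hs
      exact measureReal_spaDegEvent_zero_succ hm hp0 hp1 hA1 hA2 hXU hB hs.1 hs.2
    | succ j =>
      rw [spaDegEvent_self_succ, measureReal_empty, add_zero, spaMeanCount, mul_add,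
        ← mul_assoc, ← mul_assoc, ← ih, ← ih, Finset.sum_mul, Finset.sum_mul,
        ← Finset.sum_add_distrib]
      refine Finset.sum_congr rfl fun s hs => ?_
      rw [Finset.mem_Icc] at hs
      exact measureReal_spaDegEvent_succ_succ hm hp0 hp1 hA1 hA2 hXU hB hs.1 hs.2

end IsSPASource

lemma exists_abs_le_of_abs_sub_one_sub_div_mul_le {d : ℕ → ℝ} {α K : ℝ} (hα : 0 < α)
    (h : ∀ᶠ t : ℕ in atTop, |d (t + 1) - (1 - α / t) * d t| ≤ K / t) :
    ∃ C, ∀ᶠ t : ℕ in atTop, |d t| ≤ C := by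
  obtain ⟨T, hT⟩ := eventually_atTop.mp
    ((h.and (tendsto_natCast_atTop_atTop.eventually_ge_atTop α)).and (eventually_gt_atTop 0))
  set C := max |d T| (K / α)
  refine ⟨C, eventually_atTop.mpr ⟨T, fun t ht => ?_⟩⟩
  induction t, ht using Nat.le_induction with
  | base => exact le_max_left _ _
  | succ t ht ih =>
    obtain ⟨⟨hstep, hαt⟩, ht0⟩ := hT t ht
    have htpos : (0 : ℝ) < t := by exact_mod_cast ht0
    have hfac : 0 ≤ 1 - α / t := by rwa [sub_nonneg, div_le_one htpos]
    have hK : K ≤ α * C := (div_le_iff₀' hα).mp (le_max_right _ _)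
    calc |d (t + 1)| ≤ (1 - α / t) * |d t| + K / t := by
          have := abs_sub_abs_le_abs_sub (d (t + 1)) ((1 - α / t) * d t)
          rw [abs_mul, abs_of_nonneg hfac] at this
          linarith
      _ ≤ (1 - α / t) * C + K / t := by gcongr
      _ = C - (α * C - K) / t := by field_simp; ring
      _ ≤ C := sub_le_self _ (div_nonneg (by linarith) htpos.le)

section Asymptotics

variable {p A1 A2 : ℝ}

lemma spaC_pos (hp0 : 0 < p) (hA1 : 0 ≤ A1) (hA2 : 0 < A2) : ∀ i, 0 < spaC p A1 A2 i
  | 0 => by rw [spaC]; positivity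
  | i + 1 => by have := spaC_pos hp0 hA1 hA2 i; rw [spaC]; positivity

lemma spaGainProb_eq {j t : ℕ} (hpos : 0 < A1 * j + A2) (ht : A1 * j + A2 ≤ t) :
    spaGainProb p A1 A2 j t = p * (A1 * j + A2) / t := by
  rw [spaGainProb, min_eq_left ((div_le_one (hpos.trans_le ht)).mpr ht), mul_div_assoc]

lemma spaMeanCount_sub_zero_succ (hp0 : 0 ≤ p) (hA2 : 0 < A2) {t : ℕ} (ht : A2 ≤ t) :
    spaMeanCount p A1 A2 0 (t + 1) - spaC p A1 A2 0 * (t + 1 : ℕ) =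
      (1 - p * A2 / t) * (spaMeanCount p A1 A2 0 t - spaC p A1 A2 0 * t) := by
  have hpos : (0 : ℝ) < A1 * (0 : ℕ) + A2 := by simpa using hA2
  rw [spaMeanCount, spaGainProb_eq hpos (by simpa using ht), spaC]
  have : (1 : ℝ) + p * A2 ≠ 0 := by positivity
  have : (t : ℝ) ≠ 0 := (hA2.trans_le ht).ne'
  push_cast
  field_simp
  ring

lemma spaMeanCount_sub_succ_succ (hp0 : 0 ≤ p) (hA1 : 0 ≤ A1) (hA2 : 0 < A2) {i t : ℕ}
    (ht : A1 * (i + 1 : ℕ) + A2 ≤ t) :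
    spaMeanCount p A1 A2 (i + 1) (t + 1) - spaC p A1 A2 (i + 1) * (t + 1 : ℕ) =
      (1 - p * (A1 * (i + 1 : ℕ) + A2) / t) *
          (spaMeanCount p A1 A2 (i + 1) t - spaC p A1 A2 (i + 1) * t) +
        p * (A1 * i + A2) / t * (spaMeanCount p A1 A2 i t - spaC p A1 A2 i * t) := by
  have hpos (j : ℕ) : (0 : ℝ) < A1 * j + A2 := by positivity
  have hle : A1 * (i : ℕ) + A2 ≤ t :=
    le_trans (by gcongr; exact_mod_cast i.le_succ) ht
  rw [spaMeanCount, spaGainProb_eq (hpos _) ht, spaGainProb_eq (hpos _) hle, spaC]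
  have : (1 : ℝ) + p * (A1 * (i + 1) + A2) ≠ 0 := by positivity
  have : (t : ℝ) ≠ 0 := ((hpos _).trans_le ht).ne'
  push_cast
  field_simp
  ring

lemma exists_abs_spaMeanCount_sub_le (hp0 : 0 < p) (hA1 : 0 ≤ A1) (hA2 : 0 < A2) :
    ∀ i, ∃ C, ∀ᶠ t : ℕ in atTop, |spaMeanCount p A1 A2 i t - spaC p A1 A2 i * t| ≤ C
  | 0 => by
    refine exists_abs_le_of_abs_sub_one_sub_div_mul_le (K := 0) (by positivity : 0 < p * A2) ?_
    filter_upwards [tendsto_natCast_atTop_atTop.eventually_ge_atTop A2] with t ht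
    rw [spaMeanCount_sub_zero_succ hp0.le hA2 ht, sub_self, abs_zero, zero_div]
  | i + 1 => by
    obtain ⟨C, hC⟩ := exists_abs_spaMeanCount_sub_le hp0 hA1 hA2 i
    have hα : 0 < p * (A1 * (i + 1 : ℕ) + A2) := by positivity
    refine exists_abs_le_of_abs_sub_one_sub_div_mul_le (K := p * (A1 * i + A2) * C) hα ?_
    filter_upwards [hC, tendsto_natCast_atTop_atTop.eventually_ge_atTop (A1 * (i + 1 : ℕ) + A2)]
      with t hCt ht
    have hcoef : 0 ≤ p * (A1 * i + A2) / t := by positivity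
    calc _ = p * (A1 * i + A2) / t * |spaMeanCount p A1 A2 i t - spaC p A1 A2 i * t| := by
          rw [spaMeanCount_sub_succ_succ hp0.le hA1 hA2 ht, add_sub_cancel_left, abs_mul,
            abs_of_nonneg hcoef]
      _ ≤ p * (A1 * i + A2) / t * C := by gcongr
      _ = _ := by ring

lemma tendsto_spaMeanCount_div (hp0 : 0 < p) (hA1 : 0 ≤ A1) (hA2 : 0 < A2) (i : ℕ) :
    Tendsto (fun t : ℕ => spaMeanCount p A1 A2 i t / (spaC p A1 A2 i * t)) atTop (𝓝 1) := by
  obtain ⟨C, hC⟩ := exists_abs_spaMeanCount_sub_le hp0 hA1 hA2 i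
  have hc := spaC_pos hp0 hA1 hA2 i
  rw [← tendsto_sub_nhds_zero_iff]
  refine squeeze_zero_norm' ?_
    (tendsto_const_div_atTop_nhds_zero_nat (C / spaC p A1 A2 i))
  filter_upwards [hC, eventually_gt_atTop 0] with t hCt ht
  have hct : 0 < spaC p A1 A2 i * t := by positivity
  rw [Real.norm_eq_abs, div_sub_one hct.ne', abs_div, abs_of_pos hct, div_div]
  gcongr

end Asymptotics

lemma IsSPASource.integral_spaNBall {m : ℕ} {p A1 A2 : ℝ} {Ω : Type} [MeasureSpace Ω]
    [IsProbabilityMeasure (ℙ : Measure Ω)] {X : ℕ → Ω → SPATorus m} {U : ℕ → ℕ → Ω → ℝ}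
    (hXU : IsSPASource m X U) (z : SPATorus m) (r : ℝ) (i t : ℕ) :
    ∫ ω, (spaNBall p A1 A2 m (fun a => X a ω) (fun a b => U a b ω) z r i t : ℝ) ∂ℙ =
      ∑ s ∈ Finset.Icc 1 t,
        (ℙ : Measure Ω).real (spaDegEvent p A1 A2 m X U (closedBall z r) s i t) := by
  have hcount (ω : Ω) :
      (spaNBall p A1 A2 m (fun a => X a ω) (fun a b => U a b ω) z r i t : ℝ) =
        ∑ s ∈ Finset.Icc 1 t, (spaDegEvent p A1 A2 m X U (closedBall z r) s i t).indicator 1 ω := by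
    rw [spaNBall, Finset.natCast_card_filter]
    simp [Set.indicator_apply, spaDegEvent]
  have hmeas {s : ℕ} (hs : s ∈ Finset.Icc 1 t) :
      MeasurableSet (spaDegEvent p A1 A2 m X U (closedBall z r) s i t) :=
    hXU.measurableSet_spaDegEvent measurableSet_closedBall (Finset.mem_Icc.mp hs).2
  simp_rw [hcount]
  rw [integral_finsetSum _ fun s hs => (integrable_const 1).indicator (hmeas hs)]
  exact Finset.sum_congr rfl fun s hs => integral_indicator_one (hmeas hs)

theorem spa_expected_degree_distribution_in_ball_general
    (m : ℕ) (hm : 1 ≤ m) (p A1 A2 : ℝ)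
    (hp0 : 0 < p) (hp1 : p ≤ 1) (hA1 : 0 < A1) (hA2 : 0 < A2)
    {Ω : Type} [MeasureSpace Ω] [IsProbabilityMeasure (ℙ : Measure Ω)]
    (X : ℕ → Ω → SPATorus m) (U : ℕ → ℕ → Ω → ℝ) (hXU : IsSPASource m X U)
    (z : ℕ → SPATorus m) (b : ℕ → ℝ) (hb0 : ∀ n, 0 < b n) (hb1 : ∀ n, b n ≤ 1)
    (t : ℕ → ℕ) (hbt : Tendsto (fun n : ℕ => b n * t n) atTop atTop)
    (i : ℕ) :
    Tendsto (fun n : ℕ =>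
        (∫ ωp : Ω, (spaNBall p A1 A2 m (fun a => X a ωp) (fun a b' => U a b' ωp)
            (z n) (torusRad m (b n)) i (t n) : ℝ) ∂ℙ) /
          (spaC p A1 A2 i * (b n * t n)))
      atTop (nhds 1) := by
  have hmean (n : ℕ) :
      ∫ ωp : Ω, (spaNBall p A1 A2 m (fun a => X a ωp) (fun a b' => U a b' ωp)
          (z n) (torusRad m (b n)) i (t n) : ℝ) ∂ℙ = b n * spaMeanCount p A1 A2 i (t n) := by
    rw [hXU.integral_spaNBall, hXU.sum_measureReal_spaDegEvent hm hp0.le hp1 hA1.le hA2.le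
      measurableSet_closedBall, measureReal_def, volume_closedBall_torusRad hm _ (hb0 n).le (hb1 n),
      ENNReal.toReal_ofReal (hb0 n).le]
  have ht : Tendsto t atTop atTop := tendsto_natCast_atTop_iff.mp <|
    tendsto_atTop_mono (fun n => mul_le_of_le_one_left (Nat.cast_nonneg _) (hb1 n)) hbt
  refine ((tendsto_spaMeanCount_div hp0 hA1.le hA2 i).comp ht).congr fun n => ?_
  rw [Function.comp_apply, hmean, mul_left_comm, mul_div_mul_left _ _ (hb0 n).ne']

/-- expected local degree distribution. For a ball `B = B(n)` of volume
`b(n)` and time `t(n)` with `bt → ∞`, for each fixed `i`,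
`E(N_{i,t}) = (1+o(1)) c_i b t`. -/
theorem spa_expected_degree_distribution_in_ball
    (m : ℕ) (hm : 1 ≤ m) (p A1 A2 : ℝ)
    (hp0 : 0 < p) (hp1 : p ≤ 1) (hA1 : 0 < A1) (hA2 : 0 < A2) (hpA1 : p * A1 < 1)
    {Ω : Type} [MeasureSpace Ω] [IsProbabilityMeasure (ℙ : Measure Ω)]
    (X : ℕ → Ω → SPATorus m) (U : ℕ → ℕ → Ω → ℝ) (hXU : IsSPASource m X U)
    (z : ℕ → SPATorus m) (b : ℕ → ℝ) (hb0 : ∀ n, 0 < b n) (hb1 : ∀ n, b n ≤ 1)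
    (t : ℕ → ℕ) (hbt : Tendsto (fun n : ℕ => b n * t n) atTop atTop)
    (i : ℕ) :
    Tendsto (fun n : ℕ =>
        (∫ ωp : Ω, (spaNBall p A1 A2 m (fun a => X a ωp) (fun a b' => U a b' ωp)
            (z n) (torusRad m (b n)) i (t n) : ℝ) ∂ℙ) /
          (spaC p A1 A2 i * (b n * t n)))
      atTop (nhds 1) :=
  spa_expected_degree_distribution_in_ball_general m hm p A1 A2 hp0 hp1 hA1 hA2 X U hXU z b hb0 hb1
    t hbt i
end
end

section
/- Limit lemma for linear recurrences of real sequences: If (α_t)_{t≥1}, (β_t)_{t≥1}, (γ_t)_{t≥1} are real sequences satisfying α_{t+1} = (1 − β_t/t)·α_t + γ_t for all t ≥ 1, and lim_{t→∞} β_t = β > 0 and lim_{t→∞} γ_t = γ, then lim_{t→∞} α_t/t exists and equals γ/(1+β). -/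
/-!
Write `L = γ / (1 + β)` and `e t = α t - L t`. Since `L (1 + β) = γ`, the recurrence becomes
`e (t+1) = (1 - β_t / t) e t + ε t` with `ε t = γ_t - γ - (β_t - β) L → 0`. Eventually
`0 ≤ β_t ≤ t`, so the factor has absolute value at most `1` and `|e t| ≤ C + ∑_{k<t} |ε k|`;
by Cesàro the right-hand side is `o(t)`, hence `α t / t - L = e t / t → 0`.
-/

open Filter Finset Topology

theorem le_add_sum_Ico_of_le_add {M : Type*} [AddCommMonoid M] [PartialOrder M]
    [IsOrderedAddMonoid M] {u δ : ℕ → M} {T : ℕ} (hstep : ∀ n ≥ T, u (n + 1) ≤ u n + δ n) :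
    ∀ n ≥ T, u n ≤ u T + ∑ k ∈ Ico T n, δ k := by
  intro n hn
  induction n, hn using Nat.le_induction with
  | base => simp
  | succ n hn ih =>
    calc u (n + 1) ≤ u n + δ n := hstep n hn
      _ ≤ u T + ∑ k ∈ Ico T n, δ k + δ n := add_le_add_left ih _
      _ = u T + ∑ k ∈ Ico T (n + 1), δ k := by rw [sum_Ico_succ_top hn, add_assoc]

theorem tendsto_div_natCast_zero_of_abs_succ_le {e δ : ℕ → ℝ} (hδ : Tendsto δ atTop (𝓝 0))
    (hstep : ∀ᶠ n in atTop, |e (n + 1)| ≤ |e n| + δ n) :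
    Tendsto (fun n : ℕ => e n / n) atTop (𝓝 0) := by
  obtain ⟨T, hT⟩ := eventually_atTop.mp hstep
  have hbound : ∀ n ≥ T, |e n| ≤ |e T| + ∑ k ∈ range n, |δ k| := fun n hn =>
    calc |e n| ≤ |e T| + ∑ k ∈ Ico T n, δ k :=
          le_add_sum_Ico_of_le_add (u := fun n => |e n|) hT n hn
      _ ≤ |e T| + ∑ k ∈ Ico T n, |δ k| := by gcongr; exact le_abs_self _
      _ ≤ |e T| + ∑ k ∈ range n, |δ k| := add_le_add le_rfl (sum_le_sum_of_subset_of_nonneg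
          (fun k hk => mem_range.mpr (mem_Ico.mp hk).2) fun _ _ _ => abs_nonneg _)
  have hcesaro : Tendsto (fun n : ℕ => (|e T| + ∑ k ∈ range n, |δ k|) / n) atTop (𝓝 0) := by
    have h := ((tendsto_const_nhds (x := |e T|)).div_atTop tendsto_natCast_atTop_atTop).add
      (by simpa using hδ.abs.cesaro)
    simpa only [add_zero, add_div, inv_mul_eq_div] using h
  refine squeeze_zero_norm' ?_ hcesaro
  filter_upwards [eventually_ge_atTop T] with n hn
  rw [Real.norm_eq_abs, abs_div, Nat.abs_cast]
  exact div_le_div_of_nonneg_right (hbound n hn) n.cast_nonneg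

theorem eventually_abs_one_sub_div_natCast_le_one {b : ℕ → ℝ} {β : ℝ} (hβ : 0 < β)
    (hb : Tendsto b atTop (𝓝 β)) : ∀ᶠ t : ℕ in atTop, |1 - b t / t| ≤ 1 := by
  have hdiv : Tendsto (fun t : ℕ => b t / t) atTop (𝓝 0) :=
    hb.div_atTop tendsto_natCast_atTop_atTop
  filter_upwards [hb.eventually (eventually_gt_nhds hβ),
    hdiv.eventually (eventually_lt_nhds one_pos)] with t hpos hlt
  have : 0 ≤ b t / t := div_nonneg hpos.le t.cast_nonneg
  rw [abs_le]
  constructor <;> linarith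

/-- Lemma 3.1 of Chung–Lu type: if `α_{t+1} = (1 - β_t/t) α_t + γ_t` for
all `t ≥ 1`, `β_t → β > 0` and `γ_t → γ`, then `α_t / t → γ / (1 + β)`. -/
theorem limit_of_linear_recurrence
    (α β' γ' : ℕ → ℝ) (β γ : ℝ) (hβ : 0 < β)
    (hrec : ∀ t : ℕ, 1 ≤ t → α (t + 1) = (1 - β' t / (t : ℝ)) * α t + γ' t)
    (hβ' : Tendsto β' atTop (nhds β)) (hγ' : Tendsto γ' atTop (nhds γ)) :
    Tendsto (fun t : ℕ => α t / (t : ℝ)) atTop (nhds (γ / (1 + β))) := by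
  set L := γ / (1 + β)
  have hL : L * (1 + β) = γ := div_mul_cancel₀ _ (by positivity)
  set e : ℕ → ℝ := fun t => α t - L * t
  set ε : ℕ → ℝ := fun t => γ' t - γ - (β' t - β) * L
  have hε : Tendsto ε atTop (𝓝 0) := by
    simpa using (hγ'.sub_const γ).sub ((hβ'.sub_const β).mul_const L)
  have hstep : ∀ᶠ t : ℕ in atTop, |e (t + 1)| ≤ |e t| + |ε t| := by
    filter_upwards [eventually_abs_one_sub_div_natCast_le_one hβ hβ', eventually_ge_atTop 1]
      with t hcontr ht
    have ht0 : (t : ℝ) ≠ 0 := by positivity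
    have herr : e (t + 1) = (1 - β' t / t) * e t + ε t := by
      simp only [e, ε, hrec t ht, Nat.cast_succ]
      field_simp
      linear_combination (-(t : ℝ)) * hL
    calc |e (t + 1)| ≤ |1 - β' t / t| * |e t| + |ε t| := by
          rw [herr, ← abs_mul]; exact abs_add_le _ _
      _ ≤ |e t| + |ε t| := by gcongr; exact mul_le_of_le_one_left (abs_nonneg _) hcontr
  have he := tendsto_div_natCast_zero_of_abs_succ_le (by simpa using hε.abs) hstep
  rw [← tendsto_sub_nhds_zero_iff]
  refine he.congr' ?_
  filter_upwards [eventually_ne_atTop 0] with t ht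
  have : (t : ℝ) ≠ 0 := Nat.cast_ne_zero.mpr ht
  simp only [e]
  field_simp
end

section
/- Azuma-type maximal inequality for near-supermartingales: Let (Ω, ℱ, P) be a probability space with a filtration ℱ_0 ⊆ ℱ_1 ⊆ … ⊆ ℱ_n, and let X_0, X_1, …, X_n be real random variables with X_t measurable with respect to ℱ_t for each t. Suppose that for some real constants β_1, …, β_n and nonnegative constants γ_1, …, γ_n one has E(X_t − X_{t−1} | ℱ_{t−1}) < β_t almost surely and |X_t − X_{t−1} − β_t| ≤ γ_t almost surely, for 1 ≤ t ≤ n. Then for all α > 0, P(there exists s with 0 ≤ s ≤ n such that X_s − X_0 ≥ Σ_{t=1}^{s} β_t + α) ≤ exp(−α² / (2·Σ_{t=1}^{n} γ_t²)). -/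
/-!
Let `D_t = X_t - X_{t-1} - β_t` and `S = ∑ γ_t ²`. On `[-γ, γ]` the function `x ↦ exp (l * x)` lies
below its chord, so `|D| ≤ γ` and `E(D | ℱ) ≤ 0` give the conditional Hoeffding bound
`E(exp (l * D) | ℱ) ≤ cosh (l * γ) ≤ exp (l² γ² / 2)` for `l ≥ 0`. Hence
`exp (l * ∑_{t ≤ s} D_t - l² / 2 * ∑_{t ≤ s} γ_t²)` is a nonnegative supermartingale starting
at `1`, and stopping it when `∑_{t ≤ s} D_t` first reaches `α` bounds the probability by
`exp (l² S / 2 - l α)`, which is `exp (-α² / (2 S))` for `l = α / S`.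
-/

open MeasureTheory ProbabilityTheory Filter

open Real in
theorem Real.exp_mul_le_cosh_add_sinh_div_mul {a γ x : ℝ} (hγ : 0 ≤ γ) (hx : |x| ≤ γ) :
    exp (a * x) ≤ cosh (a * γ) + sinh (a * γ) / γ * x := by
  obtain rfl | hγ := hγ.eq_or_lt
  · simp [abs_nonpos_iff.mp hx]
  obtain ⟨hxl, hxu⟩ := abs_le.mp hx
  have hconv := convexOn_exp.2 (Set.mem_univ (a * γ)) (Set.mem_univ (-(a * γ)))
    (div_nonneg (by linarith) (by positivity) : 0 ≤ (γ + x) / (2 * γ))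
    (div_nonneg (by linarith) (by positivity) : 0 ≤ (γ - x) / (2 * γ))
    (by field_simp; ring)
  have hcomb : (γ + x) / (2 * γ) * (a * γ) + (γ - x) / (2 * γ) * -(a * γ) = a * x := by
    field_simp; ring
  simp only [smul_eq_mul, hcomb] at hconv
  refine hconv.trans_eq ?_
  rw [cosh_eq, sinh_eq]
  field_simp
  ring

section
variable {Ω : Type*} {m0 : MeasurableSpace Ω} {μ : Measure Ω}

theorem condExp_exp_mul_le_of_abs_le_of_condExp_nonpos [IsProbabilityMeasure μ]
    {m : MeasurableSpace Ω} (hm : m ≤ m0) {D : Ω → ℝ} (hD : Integrable D μ) {γ l : ℝ}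
    (hl : 0 ≤ l) (hbd : ∀ᵐ ω ∂μ, |D ω| ≤ γ) (hmean : μ[D|m] ≤ᵐ[μ] 0) :
    μ[fun ω => Real.exp (l * D ω)|m] ≤ᵐ[μ] fun _ => Real.exp (l ^ 2 * γ ^ 2 / 2) := by
  have hγ : 0 ≤ γ := let ⟨_, hω⟩ := hbd.exists; (abs_nonneg _).trans hω
  set a := Real.sinh (l * γ) / γ
  have ha : 0 ≤ a := div_nonneg (Real.sinh_nonneg_iff.mpr (by positivity)) hγ
  set chord : Ω → ℝ := (fun _ => Real.cosh (l * γ)) + a • D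
  have hchord : ∀ᵐ ω ∂μ, Real.exp (l * D ω) ≤ chord ω := by
    filter_upwards [hbd] with ω hω using Real.exp_mul_le_cosh_add_sinh_div_mul hγ hω
  have hexp_int : Integrable (fun ω => Real.exp (l * D ω)) μ := by
    refine .mono' (integrable_const (Real.exp (l * γ)))
      (Real.continuous_exp.comp_aestronglyMeasurable (hD.1.const_mul l)) ?_
    filter_upwards [hbd] with ω hω
    rw [Real.norm_of_nonneg (Real.exp_pos _).le, Real.exp_le_exp]
    exact mul_le_mul_of_nonneg_left (abs_le.mp hω).2 hl
  have hchord_condExp : μ[chord|m] =ᵐ[μ] (fun _ => Real.cosh (l * γ)) + a • μ[D|m] := by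
    refine (condExp_add (integrable_const _) (hD.smul a) m).trans ?_
    rw [condExp_const hm]
    exact (condExp_smul a D m).add_left
  filter_upwards [condExp_mono (m := m) hexp_int ((integrable_const _).add (hD.smul a)) hchord,
    hchord_condExp, hmean] with ω hmono heq hneg
  calc _ ≤ Real.cosh (l * γ) + a * μ[D|m] ω := hmono.trans_eq heq
    _ ≤ Real.cosh (l * γ) := by linarith [mul_nonpos_of_nonneg_of_nonpos ha hneg]
    _ ≤ _ := by simpa [mul_pow] using Real.cosh_le_exp_half_sq (l * γ)

theorem MeasureTheory.Supermartingale.maximal_ineq [IsFiniteMeasure μ] {𝒢 : Filtration ℕ m0}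
    {f : ℕ → Ω → ℝ} (hf : Supermartingale f 𝒢 μ) (hnonneg : 0 ≤ f) (c : ℝ) (n : ℕ) :
    c * μ.real {ω | ∃ k ≤ n, c ≤ f k ω} ≤ μ[f 0] := by
  set E := {ω | ∃ k ≤ n, c ≤ f k ω}
  have hE : MeasurableSet E := by
    have hE_eq : E = ⋃ k ∈ Set.Iic n, {ω | c ≤ f k ω} := by ext; simp [E]
    exact hE_eq ▸ .biUnion (Set.to_countable _) fun k _ =>
      measurableSet_le measurable_const ((hf.stronglyAdapted k).measurable.le (𝒢.le k))
  set τ : Ω → ℕ∞ := fun ω => (hittingBtwn f (Set.Ici c) 0 n ω : ℕ)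
  have hτ : IsStoppingTime 𝒢 τ :=
    hf.stronglyAdapted.adapted.isStoppingTime_hittingBtwn measurableSet_Ici
  have hτn : ∀ ω, τ ω ≤ n := fun ω => WithTop.coe_le_coe.mpr (hittingBtwn_le ω)
  have hstopped : ∫ ω, stoppedValue f τ ω ∂μ ≤ μ[f 0] := by
    have := hf.neg.expected_stoppedValue_mono (isStoppingTime_const 𝒢 0) hτ (fun _ => zero_le) hτn
    simpa [stoppedValue_const, stoppedValue, integral_neg] using this
  have hint : Integrable (stoppedValue f τ) μ := by
    have := (hf.neg.integrable_stoppedValue hτ hτn).neg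
    rwa [show stoppedValue (-f) τ = -stoppedValue f τ from rfl, neg_neg] at this
  have hon : ∀ ω ∈ E, c ≤ stoppedValue f τ ω := fun ω ⟨k, hk, hck⟩ =>
    stoppedValue_hittingBtwn_mem ⟨k, ⟨zero_le, hk⟩, hck⟩
  calc c * μ.real E ≤ ∫ ω in E, stoppedValue f τ ω ∂μ :=
        setIntegral_ge_of_const_le_real hE (measure_ne_top μ E) hon hint.integrableOn
    _ ≤ ∫ ω, stoppedValue f τ ω ∂μ :=
        setIntegral_le_integral hint (.of_forall fun ω => hnonneg _ ω)
    _ ≤ μ[f 0] := hstopped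

variable [IsProbabilityMeasure μ] {F : Filtration ℕ m0} {Y : ℕ → Ω → ℝ} {γ : ℕ → ℝ}

theorem supermartingale_exp_mul_sub_sum_sq {l : ℝ} (hl : 0 ≤ l) (hY : StronglyAdapted F Y)
    (hY0 : Y 0 = 0) (hbd : ∀ t, ∀ᵐ ω ∂μ, |Y (t + 1) ω - Y t ω| ≤ γ (t + 1))
    (hdrift : ∀ t, μ[Y (t + 1) - Y t|F t] ≤ᵐ[μ] 0) :
    Supermartingale
      (fun t ω => Real.exp (l * Y t ω - l ^ 2 / 2 * ∑ s ∈ Finset.Icc 1 t, γ s ^ 2)) F μ := by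
  set M : ℕ → Ω → ℝ := fun t ω =>
    Real.exp (l * Y t ω - l ^ 2 / 2 * ∑ s ∈ Finset.Icc 1 t, γ s ^ 2)
  set G : ℕ → Ω → ℝ := fun t =>
    Real.exp (-(l ^ 2 * γ (t + 1) ^ 2 / 2)) • fun ω => Real.exp (l * (Y (t + 1) - Y t) ω)
  have hM_succ : ∀ t, M (t + 1) = M t * G t := fun t => by
    funext ω
    simp only [M, G, Pi.mul_apply, Pi.smul_apply, Pi.sub_apply, smul_eq_mul,
      Finset.sum_Icc_succ_top (Nat.le_add_left 1 t), ← Real.exp_add]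
    ring_nf
  have hincr_meas : ∀ t, StronglyMeasurable[F (t + 1)] (Y (t + 1) - Y t) := fun t =>
    (hY (t + 1)).sub ((hY t).mono (F.mono t.le_succ))
  have hincr_int : ∀ t, Integrable (Y (t + 1) - Y t) μ := fun t =>
    .of_bound ((hincr_meas t).mono (F.le _)).aestronglyMeasurable (γ (t + 1)) (hbd t)
  have hG_meas : ∀ t, AEStronglyMeasurable (G t) μ := fun t =>
    .const_smul (Real.continuous_exp.comp_aestronglyMeasurable
      (((hincr_meas t).mono (F.le _)).aestronglyMeasurable.const_mul l)) _
  have hG_bdd : ∀ t, ∀ᵐ ω ∂μ, ‖G t ω‖ ≤ Real.exp (l * γ (t + 1)) := fun t => by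
    filter_upwards [hbd t] with ω hω
    simp only [G, Pi.smul_apply, Pi.sub_apply, smul_eq_mul, ← Real.exp_add,
      Real.norm_of_nonneg (Real.exp_pos _).le, Real.exp_le_exp]
    nlinarith [mul_le_mul_of_nonneg_left (abs_le.mp hω).2 hl, sq_nonneg (l * γ (t + 1))]
  have hG : ∀ t, μ[G t|F t] ≤ᵐ[μ] 1 := fun t => by
    filter_upwards [condExp_smul (m := F t) (μ := μ) (Real.exp (-(l ^ 2 * γ (t + 1) ^ 2 / 2)))
      (fun ω => Real.exp (l * (Y (t + 1) - Y t) ω)),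
      condExp_exp_mul_le_of_abs_le_of_condExp_nonpos (F.le t) (hincr_int t) hl (hbd t)
        (hdrift t)] with ω hsmul hexp
    rw [hsmul, Pi.smul_apply, smul_eq_mul, Pi.one_apply, Real.exp_neg]
    exact inv_mul_le_one_of_le₀ hexp (Real.exp_pos _).le
  have hM_adapted : StronglyAdapted F M := fun t =>
    Real.continuous_exp.comp_stronglyMeasurable (((hY t).const_mul l).sub stronglyMeasurable_const)
  have hM_int : ∀ t, Integrable (M t) μ := by
    intro t
    induction t with
    | zero => simp [M, hY0]
    | succ t ih => rw [hM_succ]; exact ih.mul_bdd (hG_meas t) (hG_bdd t)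
  refine supermartingale_nat hM_adapted hM_int fun t => ?_
  filter_upwards [hM_succ t ▸ condExp_mul_of_stronglyMeasurable_left (hM_adapted t)
    (hM_succ t ▸ hM_int (t + 1)) ((integrable_const _).mono' (hG_meas t) (hG_bdd t)), hG t]
    with ω hmul hG_le
  rw [hmul, Pi.mul_apply]
  exact mul_le_of_le_one_right (Real.exp_pos _).le hG_le

theorem measureReal_exists_le_le_exp_of_condExp_sub_nonpos (hY : StronglyAdapted F Y)
    (hY0 : Y 0 = 0) (hbd : ∀ t, ∀ᵐ ω ∂μ, |Y (t + 1) ω - Y t ω| ≤ γ (t + 1))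
    (hdrift : ∀ t, μ[Y (t + 1) - Y t|F t] ≤ᵐ[μ] 0) (n : ℕ) {α : ℝ} (hα : 0 ≤ α) :
    μ.real {ω | ∃ k ≤ n, α ≤ Y k ω} ≤
      Real.exp (-α ^ 2 / (2 * ∑ t ∈ Finset.Icc 1 n, γ t ^ 2)) := by
  set S := ∑ t ∈ Finset.Icc 1 n, γ t ^ 2
  have hS0 : 0 ≤ S := Finset.sum_nonneg fun t _ => sq_nonneg (γ t)
  obtain hS | hS := hS0.eq_or_lt
  · rw [← hS, mul_zero, div_zero, Real.exp_zero]
    exact measureReal_le_one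
  set l := α / S
  set c := Real.exp (l * α - l ^ 2 / 2 * S)
  have hmax := (supermartingale_exp_mul_sub_sum_sq (div_nonneg hα hS.le) hY hY0 hbd
    hdrift).maximal_ineq (fun _ _ => (Real.exp_pos _).le) c n
  simp only [hY0, Pi.zero_apply, mul_zero, Order.lt_one_iff, Finset.Icc_eq_empty_of_lt,
    Finset.sum_empty, sub_self, Real.exp_zero, integral_const, probReal_univ, smul_eq_mul,
    mul_one] at hmax
  have hsub : {ω | ∃ k ≤ n, α ≤ Y k ω} ⊆
      {ω | ∃ k ≤ n, c ≤ Real.exp (l * Y k ω - l ^ 2 / 2 * ∑ s ∈ Finset.Icc 1 k, γ s ^ 2)} := by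
    rintro ω ⟨k, hk, hαk⟩
    refine ⟨k, hk, Real.exp_le_exp.mpr ?_⟩
    have hSk : ∑ s ∈ Finset.Icc 1 k, γ s ^ 2 ≤ S := Finset.sum_le_sum_of_subset_of_nonneg
      (Finset.Icc_subset_Icc_right hk) fun _ _ _ => sq_nonneg _
    nlinarith [mul_le_mul_of_nonneg_left hαk (div_nonneg hα hS.le), sq_nonneg l]
  calc _ ≤ _ := measureReal_mono hsub
    _ ≤ c⁻¹ * 1 := (le_inv_mul_iff₀ (Real.exp_pos _)).mpr hmax
    _ = _ := by
      rw [mul_one, ← Real.exp_neg]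
      congr 1
      simp only [l]
      field_simp
      ring

end

section DriftCorrected
variable {Ω : Type*} (X : ℕ → Ω → ℝ) (β : ℕ → ℝ) (n : ℕ)

-- Frozen after time `n`, so that it is a process on all of `ℕ` with zero increments past `n`.
def driftCorrected (t : ℕ) (ω : Ω) : ℝ :=
  X (min t n) ω - X 0 ω - ∑ s ∈ Finset.Icc 1 (min t n), β s

theorem driftCorrected_zero : driftCorrected X β n 0 = 0 := by
  ext; simp [driftCorrected]

theorem driftCorrected_of_le {t : ℕ} (ht : t ≤ n) (ω : Ω) :
    driftCorrected X β n t ω = X t ω - X 0 ω - ∑ s ∈ Finset.Icc 1 t, β s := by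
  simp only [driftCorrected, min_eq_left ht]

theorem driftCorrected_succ_sub_of_lt {t : ℕ} (ht : t < n) (ω : Ω) :
    driftCorrected X β n (t + 1) ω - driftCorrected X β n t ω =
      X (t + 1) ω - X t ω - β (t + 1) := by
  rw [driftCorrected_of_le X β n ht, driftCorrected_of_le X β n ht.le,
    Finset.sum_Icc_succ_top (Nat.le_add_left 1 t)]
  ring

theorem driftCorrected_succ_sub_of_le {t : ℕ} (ht : n ≤ t) (ω : Ω) :
    driftCorrected X β n (t + 1) ω - driftCorrected X β n t ω = 0 := by
  simp [driftCorrected, min_eq_right ht, min_eq_right (Nat.le_succ_of_le ht)]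

theorem MeasureTheory.Adapted.stronglyAdapted_driftCorrected {m0 : MeasurableSpace Ω}
    {F : Filtration ℕ m0} (hX : Adapted F X) : StronglyAdapted F (driftCorrected X β n) :=
  fun t => (((hX (min t n)).stronglyMeasurable.mono (F.mono (min_le_left t n))).sub
    ((hX 0).stronglyMeasurable.mono (F.mono zero_le))).sub stronglyMeasurable_const

end DriftCorrected

/-- Azuma-type maximal inequality for near-supermartingales (Pittel et al.):
if `E(X_t - X_{t-1} | F_{t-1}) < β_t` a.s. and `|X_t - X_{t-1} - β_t| ≤ γ_t` a.s. for
`1 ≤ t ≤ n`, then for `α > 0`,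
`P(∃ s ≤ n, X_s - X_0 ≥ ∑_{t≤s} β_t + α) ≤ exp(-α²/(2 ∑ γ_t²))`. -/
theorem azuma_maximal_inequality_supermartingale
    {Ω : Type*} [m0 : MeasureSpace Ω] [IsProbabilityMeasure (ℙ : Measure Ω)]
    (n : ℕ) (F : Filtration ℕ m0.toMeasurableSpace)
    (X : ℕ → Ω → ℝ) (hadp : Adapted F X) (hint : ∀ t, Integrable (X t) ℙ)
    (β γ : ℕ → ℝ) (hγ : ∀ t, 0 ≤ γ t)
    (hdrift : ∀ t, 1 ≤ t → t ≤ n →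
      ∀ᵐ ωp ∂ℙ, (ℙ[X t - X (t - 1)|F (t - 1)]) ωp < β t)
    (hbdd : ∀ t, 1 ≤ t → t ≤ n →
      ∀ᵐ ωp ∂ℙ, |X t ωp - X (t - 1) ωp - β t| ≤ γ t)
    (α : ℝ) (hα : 0 < α) :
    (ℙ {ωp : Ω | ∃ s : ℕ, s ≤ n ∧
        (∑ t ∈ Finset.Icc 1 s, β t) + α ≤ X s ωp - X 0 ωp}).toReal ≤
      Real.exp (-α ^ 2 / (2 * ∑ t ∈ Finset.Icc 1 n, γ t ^ 2)) := by
  have hevent : {ωp : Ω | ∃ s : ℕ, s ≤ n ∧ (∑ t ∈ Finset.Icc 1 s, β t) + α ≤ X s ωp - X 0 ωp}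
      ⊆ {ω | ∃ k ≤ n, α ≤ driftCorrected X β n k ω} := fun ω ⟨s, hs, h⟩ =>
    ⟨s, hs, by rw [driftCorrected_of_le X β n hs]; linarith⟩
  refine (measureReal_mono hevent).trans (measureReal_exists_le_le_exp_of_condExp_sub_nonpos
    (hadp.stronglyAdapted_driftCorrected X β n) (driftCorrected_zero X β n) (fun t => ?_)
    (fun t => ?_) n hα.le)
  all_goals rcases lt_or_ge t n with ht | ht
  · filter_upwards [hbdd (t + 1) (by omega) ht] with ω hω
    simpa [driftCorrected_succ_sub_of_lt X β n ht] using hω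
  · exact .of_forall fun ω => by simpa [driftCorrected_succ_sub_of_le X β n ht] using hγ (t + 1)
  · rw [show driftCorrected X β n (t + 1) - driftCorrected X β n t =
        X (t + 1) - X t - fun _ => β (t + 1) from funext (driftCorrected_succ_sub_of_lt X β n ht)]
    filter_upwards [condExp_sub ((hint _).sub (hint _)) (integrable_const (β (t + 1))) (F t),
      hdrift (t + 1) (by omega) ht] with ω hsub hlt
    rw [hsub, condExp_const (F.le t), Pi.sub_apply, Pi.zero_apply]
    rw [add_tsub_cancel_right] at hlt
    exact sub_nonpos.mpr hlt.le
  · rw [show driftCorrected X β n (t + 1) - driftCorrected X β n t = 0 from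
      funext (driftCorrected_succ_sub_of_le X β n ht), condExp_zero]
end
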